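/- arXiv:2107.13162 — 4 statements merged into one kernel-verified Lean document; each statement's English description precedes it below -/
import Mathlib

section
/- Let V be a k×k nonnegative irreducible symmetric real matrix and z ∈ (0,∞)^k with ρ(V·D[z_j]) ≤ 1. If y, z ∈ (0,∞)^k both satisfy ρ(V·D[y_j]) ≤ 1, ρ(V·D[z_j]) ≤ 1, and y_j·exp(-(V y)_j) = z_j·exp(-(V z)_j) for all j = 1,…,k, then y = z. -/
/-- Spectral radius of a real matrix: supremum of the absolute values of its
complex eigenvalues. -/
noncomputable def rho {k : ℕ} (M : Matrix (Fin k) (Fin k) ℝ) : ℝ :=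
  sSup {r : ℝ | ∃ μ ∈ spectrum ℂ (M.map (algebraMap ℝ ℂ)), r = ‖μ‖}

/-- A matrix is irreducible if its associated directed graph is strongly
connected. -/
def IsIrred {k : ℕ} (M : Matrix (Fin k) (Fin k) ℝ) : Prop :=
  ∀ S : Finset (Fin k), S.Nonempty → S ≠ Finset.univ → ∃ i ∈ S, ∃ j ∈ Sᶜ, M i j ≠ 0

/-!
Put `δ = log y - log z`. The fixed-point equations say `δ = V (y - z)`, and
`a - b ≤ a (log a - log b)` (strict for `a ≠ b`) gives `δ ≤ V (y δ)`. The matrix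
`S = D[√y] V D[√y]` is symmetric with the spectrum of `V D[y]`, so `1 - S` is positive semidefinite,
and `η = √y δ` satisfies `η ≤ S η`. If `δ` were positive somewhere, a Perron–Frobenius argument on
the positive part of `η` would make `η` a positive fixed point of `S`; then
`V (y δ) = δ = V (y - z)` with `y δ - (y - z) > 0`, forcing `V = 0` and hence `δ = 0`.
So `y ≤ z`, and `y = z` by symmetry.
-/

open Matrix
open scoped Pointwise

theorem abs_le_rho_of_mem_spectrum {k : ℕ} {M : Matrix (Fin k) (Fin k) ℝ} {μ : ℝ}
    (hμ : μ ∈ spectrum ℝ M) : |μ| ≤ rho M := by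
  have hμℂ : (μ : ℂ) ∈ spectrum ℂ (M.map (algebraMap ℝ ℂ)) := by
    rw [mem_spectrum_iff_isRoot_charpoly, charpoly_map] at *
    exact hμ.map
  have hbdd : BddAbove {r : ℝ | ∃ μ ∈ spectrum ℂ (M.map (algebraMap ℝ ℂ)), r = ‖μ‖} := by
    refine BddAbove.mono ?_
      ((finite_spectrum (M.map (algebraMap ℝ ℂ))).image (fun ν : ℂ => ‖ν‖)).bddAbove
    rintro r ⟨ν, hν, rfl⟩
    exact ⟨ν, hν, rfl⟩
  have h := le_csSup hbdd ⟨(μ : ℂ), hμℂ, rfl⟩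
  rwa [Complex.norm_real, Real.norm_eq_abs] at h

theorem rho_mul_comm {k : ℕ} (A B : Matrix (Fin k) (Fin k) ℝ) : rho (A * B) = rho (B * A) := by
  have h : spectrum ℂ ((A * B).map (algebraMap ℝ ℂ)) =
      spectrum ℂ ((B * A).map (algebraMap ℝ ℂ)) := by
    ext μ
    simp only [mem_spectrum_iff_isRoot_charpoly, Matrix.map_mul, charpoly_mul_comm]
  simp only [rho, h]

theorem posSemidef_one_sub_of_rho_le_one {k : ℕ} {S : Matrix (Fin k) (Fin k) ℝ}
    (hS : S.IsHermitian) (hρ : rho S ≤ 1) : (1 - S).PosSemidef := by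
  have hH : (1 - S).IsHermitian := isHermitian_one.sub hS
  refine hH.posSemidef_iff_eigenvalues_nonneg.mpr fun i => ?_
  have hi : hH.eigenvalues i ∈ ({1} : Set ℝ) - spectrum ℝ S := by
    rw [spectrum.singleton_sub_eq, map_one]
    exact hH.eigenvalues_mem_spectrum_real i
  rw [Set.singleton_sub] at hi
  obtain ⟨μ, hμ, hμi⟩ := hi
  have hμ1 := (le_abs_self μ).trans ((abs_le_rho_of_mem_spectrum hμ).trans hρ)
  simp only [Pi.zero_apply, ← hμi]
  linarith

theorem posSemidef_one_sub_diagonal_sqrt_mul_mul {k : ℕ} {V : Matrix (Fin k) (Fin k) ℝ}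
    (hsym : ∀ i j, V i j = V j i) {y : Fin k → ℝ} (hy : 0 ≤ y)
    (hρ : rho (V * diagonal y) ≤ 1) :
    (1 - diagonal (fun i => √(y i)) * V * diagonal (fun i => √(y i))).PosSemidef := by
  set D := diagonal (fun i => √(y i))
  refine posSemidef_one_sub_of_rho_le_one ?_ ?_
  · have hV : Vᵀ = V := by ext i j; simp [hsym i j]
    simp [IsHermitian, hV, D, Matrix.mul_assoc]
  · have hDD : D * D = diagonal y := by
      simp [D, diagonal_mul_diagonal, Real.mul_self_sqrt (hy _)]
    rwa [Matrix.mul_assoc, rho_mul_comm, Matrix.mul_assoc, hDD]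

theorem mulVec_mono_of_nonneg {m n R : Type*} [Fintype n] [Semiring R] [PartialOrder R]
    [IsOrderedRing R] {S : Matrix m n R} (hS : ∀ i j, 0 ≤ S i j) {u v : n → R} (huv : u ≤ v) :
    S *ᵥ u ≤ S *ᵥ v :=
  fun i => dotProduct_le_dotProduct_of_nonneg_left huv (hS i)

theorem mulVec_posPart_eq_of_le_mulVec {n : Type*} [Fintype n] [DecidableEq n] {S : Matrix n n ℝ}
    (hS : ∀ i j, 0 ≤ S i j) (hpsd : (1 - S).PosSemidef) {η : n → ℝ} (hη : η ≤ S *ᵥ η) :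
    S *ᵥ η⁺ = η⁺ := by
  set p := η⁺
  have hpη : p ⬝ᵥ p = p ⬝ᵥ η := by
    refine Finset.sum_congr rfl fun j _ => ?_
    rcases le_total (η j) 0 with h | h
    · simp [p, posPart_eq_zero.mpr h]
    · simp [p, posPart_eq_self.mpr h]
  have hle : p ⬝ᵥ p ≤ p ⬝ᵥ (S *ᵥ p) := calc
    p ⬝ᵥ p = p ⬝ᵥ η := hpη
    _ ≤ p ⬝ᵥ (S *ᵥ η) := dotProduct_le_dotProduct_of_nonneg_left hη (posPart_nonneg η)
    _ ≤ p ⬝ᵥ (S *ᵥ p) := dotProduct_le_dotProduct_of_nonneg_left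
        (mulVec_mono_of_nonneg hS (le_posPart η)) (posPart_nonneg η)
  have hge := hpsd.dotProduct_mulVec_nonneg p
  have hzero : star p ⬝ᵥ ((1 - S) *ᵥ p) = 0 := by
    simp only [star_trivial, sub_mulVec, one_mulVec, dotProduct_sub] at hge ⊢
    linarith
  rw [hpsd.dotProduct_mulVec_zero_iff, sub_mulVec, one_mulVec, sub_eq_zero] at hzero
  exact hzero.symm

theorem IsIrred.pos_of_mulVec_le {k : ℕ} {V : Matrix (Fin k) (Fin k) ℝ} (hirr : IsIrred V)
    (hV : ∀ i j, 0 ≤ V i j) {p : Fin k → ℝ} (hp : 0 ≤ p) (hVp : V *ᵥ p ≤ p) {i₀ : Fin k}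
    (hi₀ : 0 < p i₀) (j : Fin k) : 0 < p j := by
  by_contra hj
  set Z := Finset.univ.filter (fun i => p i = 0)
  have hZ : Z.Nonempty := ⟨j, by simpa [Z] using le_antisymm (not_lt.mp hj) (hp j)⟩
  have hZu : Z ≠ Finset.univ := fun h => by
    have hi₀Z := Finset.mem_univ i₀
    rw [← h] at hi₀Z
    simp [Z, hi₀.ne'] at hi₀Z
  obtain ⟨a, ha, b, hb, hab⟩ := hirr Z hZ hZu
  have hpa : p a = 0 := (Finset.mem_filter.mp ha).2
  have hpb : 0 < p b := (hp b).lt_of_ne' (by simpa [Z] using hb)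
  have hterm : V a b * p b ≤ (V *ᵥ p) a :=
    Finset.single_le_sum (f := fun i => V a i * p i)
      (fun i _ => mul_nonneg (hV a i) (hp i)) (Finset.mem_univ b)
  have hterm_pos : 0 < V a b * p b := mul_pos ((hV a b).lt_of_ne' hab) hpb
  linarith [hVp a]

theorem IsIrred.mulVec_eq_and_pos_of_le_mulVec {k : ℕ} {S : Matrix (Fin k) (Fin k) ℝ}
    (hirr : IsIrred S) (hS : ∀ i j, 0 ≤ S i j) (hpsd : (1 - S).PosSemidef) {η : Fin k → ℝ}
    (hη : η ≤ S *ᵥ η) {i₀ : Fin k} (hi₀ : 0 < η i₀) : S *ᵥ η = η ∧ ∀ j, 0 < η j := by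
  have hfix := mulVec_posPart_eq_of_le_mulVec hS hpsd hη
  have hpos : ∀ j, 0 < η⁺ j :=
    hirr.pos_of_mulVec_le hS (posPart_nonneg η) hfix.le (by simpa using hi₀)
  have hηp : η⁺ = η := posPart_eq_self.mpr fun j => (by simpa using hpos j : 0 < η j).le
  rw [← hηp]
  exact ⟨hfix, hpos⟩

theorem IsIrred.diagonal_mul_mul_diagonal {k : ℕ} {V : Matrix (Fin k) (Fin k) ℝ}
    (hirr : IsIrred V) {d e : Fin k → ℝ} (hd : ∀ i, d i ≠ 0) (he : ∀ i, e i ≠ 0) :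
    IsIrred (diagonal d * V * diagonal e) := by
  intro T hT hTu
  obtain ⟨i, hi, j, hj, hV⟩ := hirr T hT hTu
  exact ⟨i, hi, j, hj, by simp [hd i, he j, hV]⟩

theorem eq_zero_of_nonneg_of_mulVec_eq_zero {m n : Type*} [Fintype n] {V : Matrix m n ℝ}
    (hV : ∀ i j, 0 ≤ V i j) {v : n → ℝ} (hv : ∀ j, 0 < v j) (h : V *ᵥ v = 0) : V = 0 := by
  ext i j
  have hsum := (Finset.sum_eq_zero_iff_of_nonneg fun l _ => mul_nonneg (hV i l) (hv l).le).mp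
    (congrFun h i) j (Finset.mem_univ j)
  simpa [(hv j).ne'] using hsum

theorem sub_le_mul_log_sub_log {a b : ℝ} (ha : 0 < a) (hb : 0 < b) :
    a - b ≤ a * (Real.log a - Real.log b) := by
  have h := Real.log_le_sub_one_of_pos (div_pos hb ha)
  rw [Real.log_div hb.ne' ha.ne'] at h
  have hba : b / a * a = b := div_mul_cancel₀ b ha.ne'
  nlinarith

theorem sub_lt_mul_log_sub_log {a b : ℝ} (ha : 0 < a) (hb : 0 < b) (hab : a ≠ b) :
    a - b < a * (Real.log a - Real.log b) := by
  have h := Real.log_lt_sub_one_of_pos (div_pos hb ha) ((div_eq_one_iff_eq ha.ne').not.mpr hab.symm)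
  rw [Real.log_div hb.ne' ha.ne'] at h
  have hba : b / a * a = b := div_mul_cancel₀ b ha.ne'
  nlinarith

theorem log_sub_log_eq_mulVec_sub {n : Type*} [Fintype n] {V : Matrix n n ℝ} {y z : n → ℝ}
    (hy : ∀ i, 0 < y i) (hz : ∀ i, 0 < z i)
    (heq : ∀ j, y j * Real.exp (-(V *ᵥ y) j) = z j * Real.exp (-(V *ᵥ z) j)) (j : n) :
    Real.log (y j) - Real.log (z j) = (V *ᵥ (y - z)) j := by
  have h := congrArg Real.log (heq j)
  rw [Real.log_mul (hy j).ne' (Real.exp_ne_zero _), Real.log_mul (hz j).ne' (Real.exp_ne_zero _),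
    Real.log_exp, Real.log_exp] at h
  rw [mulVec_sub, Pi.sub_apply]
  linarith

theorem IsIrred.mulVec_mul_eq_and_pos_of_rho_le_one {k : ℕ} {V : Matrix (Fin k) (Fin k) ℝ}
    (hirr : IsIrred V) (hnn : ∀ i j, 0 ≤ V i j) (hsym : ∀ i j, V i j = V j i)
    {y : Fin k → ℝ} (hy : ∀ i, 0 < y i) (hρ : rho (V * diagonal y) ≤ 1) {δ : Fin k → ℝ}
    (hδ : δ ≤ V *ᵥ (y * δ)) {i₀ : Fin k} (hi₀ : 0 < δ i₀) :
    V *ᵥ (y * δ) = δ ∧ ∀ j, 0 < δ j := by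
  set s : Fin k → ℝ := fun i => √(y i)
  have hs : ∀ i, 0 < s i := fun i => Real.sqrt_pos.mpr (hy i)
  set S := diagonal s * V * diagonal s
  have hSη : S *ᵥ (s * δ) = s * (V *ᵥ (y * δ)) := by
    have hss : s * s = y := funext fun i => Real.mul_self_sqrt (hy i).le
    have hD : ∀ v, diagonal s *ᵥ v = s * v := fun v => funext (mulVec_diagonal s v)
    rw [← mulVec_mulVec, ← mulVec_mulVec, hD, hD, ← mul_assoc, hss]
  have hSnn : ∀ i j, 0 ≤ S i j := fun i j => by
    simp only [S, mul_diagonal, diagonal_mul]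
    exact mul_nonneg (mul_nonneg (hs i).le (hnn i j)) (hs j).le
  have hη : s * δ ≤ S *ᵥ (s * δ) := hSη ▸ mul_le_mul_of_nonneg_left hδ fun i => (hs i).le
  have hirrS : IsIrred S := hirr.diagonal_mul_mul_diagonal (fun i => (hs i).ne') fun i => (hs i).ne'
  obtain ⟨hfix, hpos⟩ := hirrS.mulVec_eq_and_pos_of_le_mulVec hSnn
    (posSemidef_one_sub_diagonal_sqrt_mul_mul hsym (fun i => (hy i).le) hρ) hη (mul_pos (hs i₀) hi₀)
  rw [hSη] at hfix
  exact ⟨funext fun j => mul_left_cancel₀ (hs j).ne' (congrFun hfix j),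
    fun j => pos_of_mul_pos_right (hpos j) (hs j).le⟩

theorem le_of_mul_exp_neg_mulVec_eq {k : ℕ} {V : Matrix (Fin k) (Fin k) ℝ}
    (hnn : ∀ i j, 0 ≤ V i j) (hsym : ∀ i j, V i j = V j i) (hirr : IsIrred V)
    {y z : Fin k → ℝ} (hy : ∀ i, 0 < y i) (hz : ∀ i, 0 < z i)
    (hρ : rho (V * diagonal y) ≤ 1)
    (heq : ∀ j, y j * Real.exp (-(V *ᵥ y) j) = z j * Real.exp (-(V *ᵥ z) j)) : y ≤ z := by
  intro i₀
  by_contra! hi₀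
  set δ : Fin k → ℝ := fun i => Real.log (y i) - Real.log (z i)
  have hδ : δ = V *ᵥ (y - z) := funext (log_sub_log_eq_mulVec_sub hy hz heq)
  have hδ₀ : 0 < δ i₀ := sub_pos.mpr (Real.log_lt_log (hz i₀) hi₀)
  have hle : δ ≤ V *ᵥ (y * δ) :=
    hδ.trans_le (mulVec_mono_of_nonneg hnn fun i => sub_le_mul_log_sub_log (hy i) (hz i))
  obtain ⟨hfix, hpos⟩ := hirr.mulVec_mul_eq_and_pos_of_rho_le_one hnn hsym hy hρ hle hδ₀
  have hgap : ∀ j, 0 < (y * δ - (y - z)) j := fun j => by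
    refine sub_pos.mpr (sub_lt_mul_log_sub_log (hy j) (hz j) fun hyz => ?_)
    simpa [δ, hyz] using hpos j
  have hV : V = 0 :=
    eq_zero_of_nonneg_of_mulVec_eq_zero hnn hgap (by rw [mulVec_sub, hfix, ← hδ, sub_self])
  have hδ₀' : δ i₀ = 0 := by rw [hδ, hV, zero_mulVec, Pi.zero_apply]
  exact hδ₀.ne' hδ₀'

theorem uniqueness_in_R0bar {k : ℕ} (V : Matrix (Fin k) (Fin k) ℝ)
    (hnn : ∀ i j, 0 ≤ V i j) (hsym : ∀ i j, V i j = V j i) (hirr : IsIrred V)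
    (y z : Fin k → ℝ) (hy : ∀ i, 0 < y i) (hz : ∀ i, 0 < z i)
    (hρy : rho (V * Matrix.diagonal y) ≤ 1) (hρz : rho (V * Matrix.diagonal z) ≤ 1)
    (heq : ∀ j, y j * Real.exp (-(V.mulVec y j)) = z j * Real.exp (-(V.mulVec z j))) :
    y = z :=
  le_antisymm (le_of_mul_exp_neg_mulVec_eq hnn hsym hirr hy hz hρy heq)
    (le_of_mul_exp_neg_mulVec_eq hnn hsym hirr hz hy hρz fun j => (heq j).symm)
end

section
/- Let V be a k×k nonnegative irreducible symmetric real matrix and z ∈ (0,∞)^k with ρ(V·D[z_j]) > 1. Then there exists a vector η ∈ (0,1)^k (all coordinates strictly between 0 and 1) such that ρ(V·D[z_j η_j]) = 1 and V·D[z_j]·(1 − η) = η^{-1} − 1, where 1 denotes the all-ones vector and η^{-1} is the vector with coordinates 1/η_i. -/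
open Matrix Finset

section NonnegMatrix

variable {n : Type*} [Fintype n] {M : Matrix n n ℝ}

lemma mulVec_mono_of_nonneg_s5 (hM : ∀ i j, 0 ≤ M i j) {x y : n → ℝ} (h : x ≤ y) :
    M *ᵥ x ≤ M *ᵥ y :=
  fun i => dotProduct_le_dotProduct_of_nonneg_left h (hM i)

lemma mulVec_nonneg_of_nonneg (hM : ∀ i j, 0 ≤ M i j) {x : n → ℝ} (hx : 0 ≤ x) :
    0 ≤ M *ᵥ x := by
  simpa using mulVec_mono_of_nonneg_s5 hM hx

lemma norm_smul_le_mulVec_norm (hM : ∀ i j, 0 ≤ M i j) {μ : ℂ} {u : n → ℂ}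
    (hu : M.map (algebraMap ℝ ℂ) *ᵥ u = μ • u) :
    ‖μ‖ • (fun i => ‖u i‖) ≤ M *ᵥ fun i => ‖u i‖ := by
  intro i
  calc ‖μ‖ * ‖u i‖ = ‖∑ j, (M i j : ℂ) * u j‖ := by
        rw [← norm_mul, ← smul_eq_mul, ← Pi.smul_apply, ← hu]; rfl
    _ ≤ ∑ j, ‖(M i j : ℂ) * u j‖ := norm_sum_le _ _
    _ = ∑ j, M i j * ‖u j‖ := by
        simp only [norm_mul, Complex.norm_real, Real.norm_of_nonneg (hM _ _)]

lemma smul_add_mulVec_le (hM : ∀ i j, 0 ≤ M i j) {r : ℝ} {y : n → ℝ} (h : r • y ≤ M *ᵥ y) :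
    r • (y + M *ᵥ y) ≤ M *ᵥ (y + M *ᵥ y) := by
  rw [smul_add, ← mulVec_smul, mulVec_add]
  exact add_le_add h (mulVec_mono_of_nonneg_s5 hM h)

end NonnegMatrix

section Irreducible

variable {k : ℕ} {M : Matrix (Fin k) (Fin k) ℝ}

lemma IsIrred.mul_diagonal (hM : IsIrred M) {z : Fin k → ℝ} (hz : ∀ i, z i ≠ 0) :
    IsIrred (M * diagonal z) := by
  intro S hS hSu
  obtain ⟨i, hi, j, hj, hMij⟩ := hM S hS hSu
  exact ⟨i, hi, j, hj, by simpa [mul_diagonal] using And.intro hMij (hz j)⟩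

lemma card_zeros_add_mulVec_lt (hM : ∀ i j, 0 ≤ M i j) (hirr : IsIrred M) {y : Fin k → ℝ}
    (hy : 0 ≤ y) (hy0 : y ≠ 0) (hZ : ∃ i, y i = 0) :
    #{i | (y + M *ᵥ y) i = 0} < #{i | y i = 0} := by
  set Z : Finset (Fin k) := {i | y i = 0}
  have hyi : ∀ i, 0 ≤ y i := hy
  have hMy : ∀ i, 0 ≤ (M *ᵥ y) i := mulVec_nonneg_of_nonneg hM hy
  have hsub : ({i | (y + M *ᵥ y) i = 0} : Finset (Fin k)) ⊆ Z := by
    intro i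
    simp only [Z, mem_filter, mem_univ, true_and, Pi.add_apply]
    intro h
    linarith [hyi i, hMy i]
  obtain ⟨i, hiZ, j, hjZ, hMij⟩ : ∃ i ∈ Z, ∃ j ∈ Zᶜ, M i j ≠ 0 := by
    refine hirr Z ?_ ?_
    · obtain ⟨i, hi⟩ := hZ
      exact ⟨i, by simpa [Z] using hi⟩
    · intro h
      exact hy0 (funext fun i => by simpa [Z] using eq_univ_iff_forall.mp h i)
  have hyj : 0 < y j := (hy j).lt_of_ne' (by simpa [Z] using hjZ)
  have hMyi : 0 < (M *ᵥ y) i :=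
    calc 0 < M i j * y j := mul_pos ((hM i j).lt_of_ne' hMij) hyj
      _ ≤ ∑ l, M i l * y l :=
        single_le_sum (f := fun l => M i l * y l) (fun l _ => mul_nonneg (hM i l) (hy l))
          (mem_univ j)
  refine card_lt_card ((ssubset_iff_of_subset hsub).mpr ⟨i, hiZ, ?_⟩)
  simp only [mem_filter, mem_univ, true_and, Pi.add_apply]
  linarith [hyi i]

lemma exists_pos_smul_le_mulVec (hM : ∀ i j, 0 ≤ M i j) (hirr : IsIrred M) {r : ℝ}
    {y : Fin k → ℝ} (hy : 0 ≤ y) (hy0 : y ≠ 0) (hsub : r • y ≤ M *ᵥ y) :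
    ∃ v : Fin k → ℝ, (∀ i, 0 < v i) ∧ r • v ≤ M *ᵥ v := by
  induction hN : #{i | y i = 0} using Nat.strong_induction_on generalizing y with
  | _ N ih =>
    by_cases hZ : ∃ i, y i = 0
    · have hMy := mulVec_nonneg_of_nonneg hM hy
      have hy0' : y + M *ᵥ y ≠ 0 := fun h =>
        hy0 (le_antisymm (h ▸ le_add_of_nonneg_right hMy) hy)
      exact ih _ (hN ▸ card_zeros_add_mulVec_lt hM hirr hy hy0 hZ) (add_nonneg hy hMy) hy0'
        (smul_add_mulVec_le hM hsub) rfl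
    · push Not at hZ
      exact ⟨y, fun i => (hy i).lt_of_ne' (hZ i), hsub⟩

end Irreducible

section SpectralRadius

lemma Matrix.mem_spectrum_iff_exists_mulVec_eq_smul {n K : Type*} [Fintype n] [DecidableEq n]
    [Field K] (A : Matrix n n K) (μ : K) :
    μ ∈ spectrum K A ↔ ∃ u : n → K, u ≠ 0 ∧ A *ᵥ u = μ • u := by
  rw [← spectrum_toLin', ← Module.End.hasEigenvalue_iff_mem_spectrum]
  constructor
  · intro h
    obtain ⟨u, hu, hu0⟩ := h.exists_hasEigenvector
    exact ⟨u, hu0, by simpa using Module.End.mem_eigenspace_iff.mp hu⟩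
  · rintro ⟨u, hu0, hu⟩
    exact Module.End.hasEigenvalue_of_hasEigenvector
      ⟨Module.End.mem_eigenspace_iff.mpr (by simpa using hu), hu0⟩

variable {k : ℕ} {M : Matrix (Fin k) (Fin k) ℝ}

lemma rho_eq_sSup_image (M : Matrix (Fin k) (Fin k) ℝ) :
    rho M = sSup (norm '' spectrum ℂ (M.map (algebraMap ℝ ℂ))) := by
  rw [rho]
  congr 1
  ext r
  simp [eq_comm]

lemma norm_le_rho {μ : ℂ} (hμ : μ ∈ spectrum ℂ (M.map (algebraMap ℝ ℂ))) : ‖μ‖ ≤ rho M := by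
  rw [rho_eq_sSup_image]
  exact le_csSup ((finite_spectrum _).image _).bddAbove ⟨μ, hμ, rfl⟩

lemma rho_le {r : ℝ} (hr : 0 ≤ r) (h : ∀ μ ∈ spectrum ℂ (M.map (algebraMap ℝ ℂ)), ‖μ‖ ≤ r) :
    rho M ≤ r := by
  rw [rho_eq_sSup_image]
  exact Real.sSup_le (by rintro _ ⟨μ, hμ, rfl⟩; exact h μ hμ) hr

lemma exists_norm_eq_rho (h : rho M ≠ 0) :
    ∃ μ ∈ spectrum ℂ (M.map (algebraMap ℝ ℂ)), ‖μ‖ = rho M := by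
  rw [rho_eq_sSup_image] at h ⊢
  have hne : (norm '' spectrum ℂ (M.map (algebraMap ℝ ℂ))).Nonempty :=
    Set.nonempty_iff_ne_empty.mpr fun he => h (by rw [he, Real.sSup_empty])
  exact hne.csSup_mem ((finite_spectrum _).image _)

lemma abs_le_rho_of_mulVec_eq_smul {x : Fin k → ℝ} (hx : x ≠ 0) {c : ℝ} (h : M *ᵥ x = c • x) :
    |c| ≤ rho M := by
  have hc : (c : ℂ) ∈ spectrum ℂ (M.map (algebraMap ℝ ℂ)) := by
    refine (mem_spectrum_iff_exists_mulVec_eq_smul _ _).mpr ⟨algebraMap ℝ ℂ ∘ x,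
      fun h0 => hx (funext fun i => by simpa using congrFun h0 i), funext fun i => ?_⟩
    rw [← RingHom.map_mulVec, h]
    simp
  simpa using norm_le_rho hc

lemma exists_nonneg_rho_smul_le_mulVec (hM : ∀ i j, 0 ≤ M i j) (h : rho M ≠ 0) :
    ∃ y : Fin k → ℝ, 0 ≤ y ∧ y ≠ 0 ∧ rho M • y ≤ M *ᵥ y := by
  obtain ⟨μ, hμ, hμρ⟩ := exists_norm_eq_rho h
  obtain ⟨u, hu0, hu⟩ := (mem_spectrum_iff_exists_mulVec_eq_smul _ _).mp hμ
  refine ⟨fun i => ‖u i‖, fun i => norm_nonneg _, fun h0 => hu0 (funext fun i => ?_), ?_⟩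
  · simpa using congrFun h0 i
  · simpa [hμρ] using norm_smul_le_mulVec_norm hM hu

lemma rho_le_of_vecMul_le (hM : ∀ i j, 0 ≤ M i j) {ℓ : Fin k → ℝ} (hℓ : ∀ i, 0 < ℓ i) {r : ℝ}
    (hr : 0 ≤ r) (h : ℓ ᵥ* M ≤ r • ℓ) : rho M ≤ r := by
  refine rho_le hr fun μ hμ => ?_
  obtain ⟨u, hu0, hu⟩ := (mem_spectrum_iff_exists_mulVec_eq_smul _ _).mp hμ
  set y : Fin k → ℝ := fun i => ‖u i‖
  have hy : 0 ≤ y := fun i => norm_nonneg _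
  obtain ⟨i, hi⟩ := Function.ne_iff.mp hu0
  have hℓy : 0 < ℓ ⬝ᵥ y :=
    sum_pos' (fun j _ => mul_nonneg (hℓ j).le (hy j))
      ⟨i, mem_univ i, mul_pos (hℓ i) (norm_pos_iff.mpr hi)⟩
  have key : ‖μ‖ * (ℓ ⬝ᵥ y) ≤ r * (ℓ ⬝ᵥ y) :=
    calc ‖μ‖ * (ℓ ⬝ᵥ y) = ℓ ⬝ᵥ (‖μ‖ • y) := by rw [dotProduct_smul, smul_eq_mul]
      _ ≤ ℓ ⬝ᵥ (M *ᵥ y) :=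
        dotProduct_le_dotProduct_of_nonneg_left (norm_smul_le_mulVec_norm hM hu) fun j => (hℓ j).le
      _ = (ℓ ᵥ* M) ⬝ᵥ y := dotProduct_mulVec _ _ _
      _ ≤ (r • ℓ) ⬝ᵥ y := dotProduct_le_dotProduct_of_nonneg_right h hy
      _ = r * (ℓ ⬝ᵥ y) := by rw [smul_dotProduct, smul_eq_mul]
  exact le_of_mul_le_mul_right key hℓy

end SpectralRadius

lemma exists_pos_forall_mul_le {n : Type*} [Finite n] (v : n → ℝ) {c : ℝ} (hc : 0 < c) :
    ∃ t > 0, ∀ i, t * v i ≤ c := by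
  obtain ⟨B, hB⟩ := (Set.finite_range v).bddAbove
  have hB' : 0 < max B 1 := lt_max_of_lt_right one_pos
  refine ⟨c / max B 1, div_pos hc hB', fun i => ?_⟩
  calc c / max B 1 * v i ≤ c / max B 1 * max B 1 :=
        mul_le_mul_of_nonneg_left ((hB ⟨i, rfl⟩).trans (le_max_left _ _)) (div_pos hc hB').le
    _ = c := div_mul_cancel₀ c hB'.ne'

section FixedPoint

variable {n : Type*} [Fintype n] {A : Matrix n n ℝ}

noncomputable def etaMap (A : Matrix n n ℝ) (η : n → ℝ) : n → ℝ := (1 + A *ᵥ (1 - η))⁻¹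

lemma one_le_one_add_mulVec_one_sub (hA : ∀ i j, 0 ≤ A i j) {η : n → ℝ} (hη : η ≤ 1) :
    1 ≤ 1 + A *ᵥ (1 - η) :=
  le_add_of_nonneg_right (mulVec_nonneg_of_nonneg hA (sub_nonneg.mpr hη))

lemma etaMap_pos (hA : ∀ i j, 0 ≤ A i j) {η : n → ℝ} (hη : η ≤ 1) (i : n) :
    0 < etaMap A η i :=
  inv_pos.mpr (zero_lt_one.trans_le (one_le_one_add_mulVec_one_sub hA hη i))

lemma etaMap_mem_Icc (hA : ∀ i j, 0 ≤ A i j) {η : n → ℝ} (hη : η ≤ 1) :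
    etaMap A η ∈ Set.Icc 0 1 :=
  ⟨fun i => (etaMap_pos hA hη i).le,
    fun i => inv_le_one_of_one_le₀ (one_le_one_add_mulVec_one_sub hA hη i)⟩

lemma etaMap_mono (hA : ∀ i j, 0 ≤ A i j) {η η' : n → ℝ} (h : η ≤ η') (hη' : η' ≤ 1) :
    etaMap A η ≤ etaMap A η' := fun i =>
  inv_anti₀ (zero_lt_one.trans_le (one_le_one_add_mulVec_one_sub hA hη' i))
    (add_le_add_right (mulVec_mono_of_nonneg_s5 hA (sub_le_sub_left h 1) i) 1)

lemma mulVec_one_sub_eq_of_etaMap_eq_self {η : n → ℝ} (h : etaMap A η = η) :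
    A *ᵥ (1 - η) = η⁻¹ - 1 := by
  have h' := congrArg (·⁻¹) h
  simp only [etaMap, inv_inv] at h'
  exact eq_sub_of_add_eq' h'

lemma exists_etaMap_eq_self_le (hA : ∀ i j, 0 ≤ A i j) {b : n → ℝ} (hb0 : 0 ≤ b) (hb1 : b ≤ 1)
    (hb : etaMap A b ≤ b) : ∃ η, η ≤ b ∧ etaMap A η = η := by
  have : Fact ((0 : n → ℝ) ≤ 1) := ⟨zero_le_one⟩
  let F : Set.Icc (0 : n → ℝ) 1 →o Set.Icc (0 : n → ℝ) 1 :=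
    ⟨fun η => ⟨etaMap A η, etaMap_mem_Icc hA η.2.2⟩, fun η η' h => etaMap_mono hA h η'.2.2⟩
  exact ⟨F.lfp, F.lfp_le (a := ⟨b, hb0, hb1⟩) hb, congrArg Subtype.val F.map_lfp⟩

lemma etaMap_one_sub_le {r : ℝ} (hr : 0 < r) {v : n → ℝ} (hv : 0 ≤ v)
    (hsub : r • v ≤ A *ᵥ v) (hsmall : ∀ i, v i ≤ 1 - r⁻¹) : etaMap A (1 - v) ≤ 1 - v := by
  intro i
  have hvi : 0 ≤ v i := hv i
  have hrv : r * v i ≤ r - 1 := by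
    have := mul_le_mul_of_nonneg_left (hsmall i) hr.le
    rwa [mul_sub, mul_inv_cancel₀ hr.ne', mul_one] at this
  have hAv : r * v i ≤ (A *ᵥ v) i := hsub i
  have hD : 0 < 1 + (A *ᵥ v) i := by nlinarith
  simp only [etaMap, sub_sub_cancel, Pi.inv_apply, Pi.add_apply, Pi.one_apply, Pi.sub_apply]
  rw [inv_le_iff_one_le_mul₀ hD]
  have hv1 : v i ≤ 1 := by nlinarith
  -- `(1 - v)(1 + A v) ≥ (1 - v)(1 + r v) = 1 + v (r - 1 - r v) ≥ 1`
  nlinarith [mul_nonneg hvi (sub_nonneg.mpr hrv),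
    mul_nonneg (sub_nonneg.mpr hv1) (sub_nonneg.mpr hAv)]

lemma exists_etaMap_eq_self (hA : ∀ i j, 0 ≤ A i j) {r : ℝ} (hr : 1 < r) {v : n → ℝ}
    (hv : ∀ i, 0 < v i) (hsub : r • v ≤ A *ᵥ v) :
    ∃ η : n → ℝ, (∀ i, 0 < η i ∧ η i < 1) ∧ etaMap A η = η := by
  have hr0 : 0 < r := zero_lt_one.trans hr
  obtain ⟨t, ht, htv⟩ := exists_pos_forall_mul_le v (sub_pos.mpr (inv_lt_one_of_one_lt₀ hr))
  have htv_pos : ∀ i, 0 < (t • v) i := fun i => mul_pos ht (hv i)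
  have htsub : r • t • v ≤ A *ᵥ t • v := by
    rw [mulVec_smul, smul_comm]
    exact smul_le_smul_of_nonneg_left hsub ht.le
  have hb0 : 0 ≤ 1 - t • v := fun i => by
    have := htv i
    have := inv_pos.mpr hr0
    simp only [Pi.sub_apply, Pi.one_apply, Pi.smul_apply, smul_eq_mul, Pi.zero_apply]
    linarith
  have hb1 : 1 - t • v ≤ 1 := sub_le_self _ fun i => (htv_pos i).le
  obtain ⟨η, hηb, hfix⟩ := exists_etaMap_eq_self_le hA hb0 hb1
    (etaMap_one_sub_le hr0 (fun i => (htv_pos i).le) htsub htv)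
  exact ⟨η, fun i => ⟨hfix ▸ etaMap_pos hA (hηb.trans hb1) i,
    (hηb i).trans_lt (sub_lt_self 1 (htv_pos i))⟩, hfix⟩

end FixedPoint

lemma rho_mul_diagonal_eq_one {k : ℕ} [NeZero k] {V : Matrix (Fin k) (Fin k) ℝ}
    (hnn : ∀ i j, 0 ≤ V i j) (hsym : ∀ i j, V i j = V j i) {z η : Fin k → ℝ}
    (hz : ∀ i, 0 < z i) (hη : ∀ i, 0 < η i ∧ η i < 1)
    (heq : ∀ i, ∑ j, V i j * z j * (1 - η j) = (η i)⁻¹ - 1) :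
    rho (V * diagonal fun j => z j * η j) = 1 := by
  set M := V * diagonal fun j => z j * η j
  have hM : ∀ i j, M i j = V i j * (z j * η j) := fun i j => mul_diagonal _ _ i j
  have hMnn : ∀ i j, 0 ≤ M i j := fun i j =>
    hM i j ▸ mul_nonneg (hnn i j) (mul_pos (hz j) (hη j).1).le
  set ℓ : Fin k → ℝ := fun i => z i * (1 - η i)
  set x : Fin k → ℝ := fun i => (η i)⁻¹ - 1
  have hleft : ℓ ᵥ* M = (1 : ℝ) • ℓ := funext fun j =>
    calc ∑ i, z i * (1 - η i) * M i j = z j * η j * ∑ i, V j i * z i * (1 - η i) := by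
          rw [mul_sum]
          exact sum_congr rfl fun i _ => by rw [hM, hsym]; ring
      _ = ((1 : ℝ) • ℓ) j := by
          rw [heq, one_smul]
          show _ = z j * (1 - η j)
          field_simp [(hη j).1.ne']
  have hright : M *ᵥ x = (1 : ℝ) • x := funext fun i =>
    calc ∑ j, M i j * ((η j)⁻¹ - 1) = ∑ j, V i j * z j * (1 - η j) :=
          sum_congr rfl fun j _ => by rw [hM]; field_simp [(hη j).1.ne']
      _ = ((1 : ℝ) • x) i := by rw [heq, one_smul]
  have hx : x ≠ 0 := fun h => by
    have h0 : (η 0)⁻¹ = 1 := sub_eq_zero.mp (congrFun h 0)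
    exact (one_lt_inv₀ (hη 0).1 |>.mpr (hη 0).2).ne' h0
  apply le_antisymm
  · exact rho_le_of_vecMul_le hMnn (fun i => mul_pos (hz i) (sub_pos.mpr (hη i).2)) zero_le_one
      hleft.le
  · simpa using abs_le_rho_of_mulVec_eq_smul hx hright

theorem exists_eta {k : ℕ} (V : Matrix (Fin k) (Fin k) ℝ)
    (hnn : ∀ i j, 0 ≤ V i j) (hsym : ∀ i j, V i j = V j i) (hirr : IsIrred V)
    (z : Fin k → ℝ) (hz : ∀ i, 0 < z i) (hρz : 1 < rho (V * Matrix.diagonal z)) :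
    ∃ η : Fin k → ℝ, (∀ i, 0 < η i ∧ η i < 1) ∧
      rho (V * Matrix.diagonal (fun j => z j * η j)) = 1 ∧
      ∀ i, ∑ j, V i j * z j * (1 - η j) = (η i)⁻¹ - 1 := by
  set A := V * diagonal z
  have hA : ∀ i j, 0 ≤ A i j := fun i j => by
    simpa [A, mul_diagonal] using mul_nonneg (hnn i j) (hz j).le
  obtain ⟨y, hy, hy0, hsub⟩ := exists_nonneg_rho_smul_le_mulVec hA (zero_lt_one.trans hρz).ne'
  have : NeZero k := ⟨by rintro rfl; exact hy0 (Subsingleton.elim _ _)⟩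
  obtain ⟨v, hv, hvsub⟩ :=
    exists_pos_smul_le_mulVec hA (hirr.mul_diagonal fun i => (hz i).ne') hy hy0 hsub
  obtain ⟨η, hη, hfix⟩ := exists_etaMap_eq_self hA hρz hv hvsub
  have heq : ∀ i, ∑ j, V i j * z j * (1 - η j) = (η i)⁻¹ - 1 := fun i => by
    simpa [A, mulVec, dotProduct, mul_diagonal, mul_assoc] using
      congrFun (mulVec_one_sub_eq_of_etaMap_eq_self hfix) i
  exact ⟨η, hη, rho_mul_diagonal_eq_one hnn hsym hz hη heq, heq⟩
end

section
/- For all integers n ≥ 1, the n-th one-dimensional spanning-tree numbers T_n = n^{n−2} satisfy T_n·(n−1) = (1/2)·Σ_{m=1}^{n−1} (n choose m)·m·(n−m)·T_m·T_{n−m}. -/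
/-!
After the substitution `m = i + 1`, `n = N + 2`, the recursion is the case `x = y = 1` of Abel's
identity `∑_{i+j=N} C(N,i) x(x+i)^(i-1) y(y+j)^(j-1) = (x+y)(x+y+N)^(N-1)`.
For `x = 1`, the polynomial `A_n(X) = ∑_{i+j=n} C(n,i) (1+i)^(i-1) (X+j)^j` equals `(X+n+1)^n`:
by induction, since `A_n' = n A_{n-1}(X+1)`, and at `X = -(n+1)` the sum `A_n` becomes an
alternating binomial sum of the degree `n-1` polynomial `(1+i)^(n-1)`, which an `n`-th forward
difference kills. The second form with `y = 1` is `A_N(1) - A_N'(1)`, because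
`(1+j)^(j-1) = (1+j)^j - j(1+j)^(j-1)`.
-/

open Finset Polynomial

variable {R : Type*} [CommRing R]

theorem sum_neg_one_pow_mul_choose_mul_pow_eq_zero (a : R) {j n : ℕ} (h : j < n) :
    ∑ k ∈ range (n + 1), (-1) ^ (n - k) * (n.choose k : R) * (a + k) ^ j = 0 := by
  have := fwdDiff_iter_eq_sum_shift (1 : R) (fun r ↦ r ^ j) n a
  rw [fwdDiff_iter_pow_eq_zero_of_lt h] at this
  simpa [zsmul_eq_mul] using this.symm

theorem Polynomial.eq_of_derivative_eq_of_eval_eq [IsAddTorsionFree R] {p q : R[X]}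
    (hd : derivative p = derivative q) (a : R) (ha : p.eval a = q.eval a) : p = q := by
  have hc := eq_C_of_derivative_eq_zero (p := p - q) (by rw [derivative_sub, hd, sub_self])
  have h0 : (p - q).coeff 0 = 0 := by simpa [ha] using (congrArg (eval a) hc).symm
  rwa [h0, C_0, sub_eq_zero] at hc

variable (R) in
/-- Abel's sum `∑ C(n,i) x (x+i)^(i-1) (X+j)^j` at `x = 1`; the truncated exponent `0 - 1 = 0`
gives the correct value `1` at `i = 0`. -/
noncomputable def abelPolynomial (n : ℕ) : R[X] :=
  ∑ p ∈ antidiagonal n, C ((n.choose p.1 : R) * (1 + p.1) ^ (p.1 - 1)) * (X + C (p.2 : R)) ^ p.2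

theorem derivative_abelPolynomial (n : ℕ) :
    derivative (abelPolynomial R n) = ∑ p ∈ antidiagonal n,
      C ((n.choose p.1 : R) * (1 + p.1) ^ (p.1 - 1) * p.2) * (X + C (p.2 : R)) ^ (p.2 - 1) := by
  simp only [abelPolynomial, derivative_sum, derivative_C_mul, derivative_X_add_C_pow, C_mul,
    mul_assoc]

theorem derivative_abelPolynomial_succ (n : ℕ) :
    derivative (abelPolynomial R (n + 1)) =
      C ((n : R) + 1) * (abelPolynomial R n).comp (X + 1) := by
  rw [derivative_abelPolynomial, Nat.sum_antidiagonal_succ', abelPolynomial, Polynomial.sum_comp,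
    mul_sum]
  simp only [Nat.cast_zero, mul_zero, C_0, zero_mul, zero_add, add_tsub_cancel_right]
  refine sum_congr rfl fun ⟨i, j⟩ hp ↦ ?_
  obtain rfl : i + j = n := HasAntidiagonal.mem_antidiagonal.mp hp
  have hchoose : (i + j + 1).choose i * (j + 1) = (i + j + 1) * (i + j).choose i := by
    have := Nat.choose_mul_succ_eq (i + j) i
    rw [show i + j + 1 - i = j + 1 by omega] at this
    linarith
  simp only [mul_comp, C_comp, pow_comp, add_comp, X_comp, ← C_1, ← mul_assoc, ← C_mul]
  congr 1
  · congr 1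
    have hcast := congrArg (Nat.cast : ℕ → R) hchoose
    push_cast at hcast ⊢
    linear_combination (1 + (i : R)) ^ (i - 1) * hcast
  · rw [add_assoc, ← C_add, Nat.cast_succ, add_comm (1 : R)]

theorem abelPolynomial_succ_isRoot (n : ℕ) :
    (abelPolynomial R (n + 1)).IsRoot (-((n : R) + 2)) := by
  calc (abelPolynomial R (n + 1)).eval (-((n : R) + 2))
      = ∑ p ∈ antidiagonal (n + 1), (-1) ^ p.2 * ((n + 1).choose p.1 : R) * (1 + p.1) ^ n := by
        rw [abelPolynomial, eval_finsetSum]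
        refine sum_congr rfl fun ⟨i, j⟩ hp ↦ ?_
        have hij : i + j = n + 1 := HasAntidiagonal.mem_antidiagonal.mp hp
        have hbase : -((n : R) + 2) + j = -(1 + i) := by
          have := congrArg (Nat.cast : ℕ → R) hij
          push_cast at this
          linear_combination this
        have hexp : (1 + (i : R)) ^ (i - 1) * (1 + i) ^ j = (1 + i) ^ n := by
          rcases i with _ | i
          · simp
          · rw [← pow_add]
            congr 1
            omega
        simp only [eval_mul, eval_C, eval_pow, eval_add, eval_X, hbase]
        rw [neg_pow]
        linear_combination ((-1) ^ j * ((n + 1).choose i : R)) * hexp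
    _ = ∑ k ∈ range (n + 1 + 1), (-1) ^ (n + 1 - k) * ((n + 1).choose k : R) * (1 + k) ^ n :=
        Nat.sum_antidiagonal_eq_sum_range_succ
          (fun i j ↦ (-1) ^ j * ((n + 1).choose i : R) * (1 + i) ^ n) _
    _ = 0 := sum_neg_one_pow_mul_choose_mul_pow_eq_zero 1 n.lt_succ_self

theorem abelPolynomial_eq [IsAddTorsionFree R] (n : ℕ) :
    abelPolynomial R n = (X + C ((n : R) + 1)) ^ n := by
  induction n with
  | zero => simp [abelPolynomial]
  | succ n ih =>
    refine eq_of_derivative_eq_of_eval_eq ?_ (-((n : R) + 2)) ?_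
    · rw [derivative_abelPolynomial_succ, ih, derivative_X_add_C_pow]
      simp only [pow_comp, add_comp, X_comp, C_comp]
      rw [Nat.add_sub_cancel, add_assoc, ← C_1, ← C_add]
      push_cast
      ring_nf
    · rw [(abelPolynomial_succ_isRoot n).eq_zero, eval_pow, eval_add, eval_X, eval_C]
      push_cast
      ring

theorem one_add_cast_pow_eq_mul_pow_pred (m : ℕ) :
    (1 + (m : R)) ^ m = (1 + m) * (1 + m) ^ (m - 1) := by
  rcases m with _ | m
  · simp
  · rw [Nat.add_sub_cancel, pow_succ']

theorem mul_sum_antidiagonal_choose_mul_pow_pred_mul_pow_pred [IsAddTorsionFree R] (n : ℕ) :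
    ((n : R) + 2) * ∑ p ∈ antidiagonal n,
        (n.choose p.1 : R) * (1 + p.1) ^ (p.1 - 1) * (1 + p.2) ^ (p.2 - 1) = 2 * (n + 2) ^ n := by
  have hsum : ∑ p ∈ antidiagonal n,
      (n.choose p.1 : R) * (1 + p.1) ^ (p.1 - 1) * (1 + p.2) ^ (p.2 - 1) =
        (abelPolynomial R n - derivative (abelPolynomial R n)).eval 1 := by
    rw [derivative_abelPolynomial, abelPolynomial, eval_sub, eval_finsetSum, eval_finsetSum,
      ← sum_sub_distrib]
    refine sum_congr rfl fun p _ ↦ ?_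
    simp only [eval_mul, eval_C, eval_pow, eval_add, eval_X]
    linear_combination -(n.choose p.1 : R) * (1 + p.1) ^ (p.1 - 1) *
      one_add_cast_pow_eq_mul_pow_pred (R := R) p.2
  rw [hsum, abelPolynomial_eq, derivative_X_add_C_pow]
  simp only [eval_sub, eval_mul, eval_C, eval_pow, eval_add, eval_X]
  rcases n with _ | n
  · norm_num
  · rw [Nat.add_sub_cancel]
    push_cast
    ring

theorem Nat.choose_succ_mul_succ_mul_succ (i j : ℕ) :
    (i + j + 2).choose (i + 1) * (i + 1) * (j + 1) =
      (i + j + 2) * (i + j + 1) * (i + j).choose i := by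
  have h₁ := Nat.add_one_mul_choose_eq (i + j + 1) i
  have h₂ := Nat.choose_mul_succ_eq (i + j) i
  rw [show i + j + 1 - i = j + 1 by omega] at h₂
  rw [← h₁, mul_assoc, ← h₂]
  ring

theorem cayley_recursion (n : ℕ) (hn : 1 ≤ n) :
    (n : ℝ) ^ (n - 2) * ((n : ℝ) - 1) =
      (1 / 2) * ∑ m ∈ Finset.Ico 1 n,
        (n.choose m : ℝ) * m * ((n - m : ℕ) : ℝ) * (m : ℝ) ^ (m - 2) *
          ((n - m : ℕ) : ℝ) ^ (n - m - 2) := by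
  obtain rfl | ⟨N, rfl⟩ : n = 1 ∨ ∃ N, n = N + 2 := by
    rcases n with _ | _ | N
    · omega
    · exact .inl rfl
    · exact .inr ⟨N, rfl⟩
  · simp
  have hsum : ∑ m ∈ Ico 1 (N + 2), ((N + 2).choose m : ℝ) * m * ((N + 2 - m : ℕ) : ℝ) *
      (m : ℝ) ^ (m - 2) * ((N + 2 - m : ℕ) : ℝ) ^ (N + 2 - m - 2) =
        ((N : ℝ) + 1) * (((N : ℝ) + 2) * ∑ p ∈ antidiagonal N,
          (N.choose p.1 : ℝ) * (1 + p.1) ^ (p.1 - 1) * (1 + p.2) ^ (p.2 - 1)) := by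
    rw [sum_Ico_eq_sum_range, Nat.sum_antidiagonal_eq_sum_range_succ_mk, mul_sum, mul_sum]
    refine sum_congr (by congr 1) fun k hk ↦ ?_
    obtain ⟨j, rfl⟩ : ∃ j, N = k + j := ⟨N - k, by have := mem_range.mp hk; omega⟩
    have hchoose := congrArg (Nat.cast : ℕ → ℝ) (Nat.choose_succ_mul_succ_mul_succ k j)
    rw [show k + j + 2 - (1 + k) = j + 1 by omega, show 1 + k - 2 = k - 1 by omega,
      show j + 1 - 2 = j - 1 by omega, show k + j - k = j by omega, add_comm 1 k]
    push_cast at hchoose ⊢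
    linear_combination (1 + (k : ℝ)) ^ (k - 1) * (1 + (j : ℝ)) ^ (j - 1) * hchoose
  rw [hsum, mul_sum_antidiagonal_choose_mul_pow_pred_mul_pow_pred, Nat.add_sub_cancel]
  push_cast
  ring
end

section
/- For all integers n ≥ 1 and k ≥ 2: Σ over x ∈ ℤ_{≥0}^k with x_1 + ⋯ + x_k = n of (n!/(x_1!⋯x_k!))·Π_{i=1}^k (n − x_i)^{x_i − 1} = k·(k−1)^{n−1}·n^{n−k}. -/
/-!
The Abel polynomials `A₀ = 1`, `Aₘ(x) = x (x - m)^(m - 1)` form a sequence of binomial type: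
`Aₘ(x + y) = ∑ⱼ (m choose j) Aⱼ(x) Aₘ₋ⱼ(y)`. As polynomials in `x` both sides agree at `x = 0`
(since `Aⱼ(0) = δⱼ₀`), and both have derivative `m · (previous identity)(x - 1)` because
`Aₘ' = m · Aₘ₋₁(x - 1)`; so the identity follows by induction on `m`. Splitting off one coordinate
at a time upgrades it to `∑ multinomial(x) ∏ᵢ A_{xᵢ}(yᵢ) = Aₘ(∑ᵢ yᵢ)`.
For `0 ≤ xᵢ ≤ n` the summand's factor `(n - xᵢ)^(xᵢ - 1)` (read as `1/n` when `xᵢ = 0`) is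
`A_{xᵢ}(n) / n`, so the sum is `n^(-k) Aₙ(k n) = k (k - 1)^(n - 1) n^(n - k)`.
-/

open Finset Polynomial

noncomputable def abelPoly (R : Type*) [CommRing R] : ℕ → R[X]
  | 0 => 1
  | n + 1 => X * (X - (n + 1 : R[X])) ^ n

theorem Polynomial.eq_of_derivative_eq_of_eval_zero_eq {R : Type*} [Ring R] [IsAddTorsionFree R]
    {p q : R[X]} (hd : derivative p = derivative q) (h0 : p.eval 0 = q.eval 0) : p = q := by
  have h := eq_C_of_derivative_eq_zero (p := p - q) (by rw [derivative_sub, hd, sub_self])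
  rwa [coeff_zero_eq_eval_zero, eval_sub, h0, sub_self, C_0, sub_eq_zero] at h

section abelPoly

variable {R : Type*} [CommRing R]

@[simp] theorem abelPoly_zero : abelPoly R 0 = 1 := rfl

theorem abelPoly_succ (n : ℕ) : abelPoly R (n + 1) = X * (X - (n + 1 : R[X])) ^ n := rfl

theorem abelPoly_succ_eval (n : ℕ) (x : R) :
    (abelPoly R (n + 1)).eval x = x * (x - (n + 1)) ^ n := by
  simp [abelPoly_succ]

theorem abelPoly_eval_zero (n : ℕ) : (abelPoly R n).eval 0 = if n = 0 then 1 else 0 := by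
  cases n <;> simp [abelPoly_succ]

theorem derivative_abelPoly_succ (n : ℕ) :
    derivative (abelPoly R (n + 1)) = (n + 1) * (abelPoly R n).comp (X - 1) := by
  cases n with
  | zero => simp [abelPoly_succ]
  | succ n =>
    simp only [abelPoly_succ, derivative_mul, derivative_X, derivative_pow, derivative_sub,
      derivative_add, derivative_natCast, derivative_one, mul_comp, X_comp, pow_comp, sub_comp,
      add_comp, natCast_comp, one_comp, C_eq_natCast]
    push_cast
    ring

theorem abelPoly_comp_X_add_C [IsAddTorsionFree R] (y : R) (n : ℕ) :
    (abelPoly R n).comp (X + C y) =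
      ∑ p ∈ antidiagonal n, C (n.choose p.1 * (abelPoly R p.2).eval y) * abelPoly R p.1 := by
  induction n with
  | zero => simp
  | succ n ih =>
    refine eq_of_derivative_eq_of_eval_zero_eq ?_ ?_
    · calc derivative ((abelPoly R (n + 1)).comp (X + C y))
          = (n + 1) * ((abelPoly R n).comp (X + C y)).comp (X - 1) := by
            rw [derivative_comp, derivative_abelPoly_succ]
            simp [mul_comp, comp_assoc, add_sub_right_comm]
        _ = ∑ p ∈ antidiagonal n, C ((n + 1).choose (p.1 + 1) * (abelPoly R p.2).eval y) *
              ((p.1 + 1) * (abelPoly R p.1).comp (X - 1)) := by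
            rw [ih, Polynomial.sum_comp, mul_sum]
            refine sum_congr rfl fun p _ => ?_
            have key := congrArg (Nat.cast : ℕ → R[X]) (Nat.add_one_mul_choose_eq n p.1)
            push_cast at key
            simp only [mul_comp, C_comp, C_mul, map_natCast, natCast_comp]
            linear_combination (C ((abelPoly R p.2).eval y) * (abelPoly R p.1).comp (X - 1)) * key
        _ = derivative (∑ p ∈ antidiagonal (n + 1),
              C ((n + 1).choose p.1 * (abelPoly R p.2).eval y) * abelPoly R p.1) := by
            simp [Nat.sum_antidiagonal_succ, derivative_abelPoly_succ]
    · simp [eval_finsetSum, abelPoly_eval_zero, Nat.sum_antidiagonal_succ]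

theorem abelPoly_eval_add [IsAddTorsionFree R] (n : ℕ) (x y : R) :
    (abelPoly R n).eval (x + y) =
      ∑ p ∈ antidiagonal n, n.choose p.1 * (abelPoly R p.1).eval x * (abelPoly R p.2).eval y := by
  have h := congrArg (eval x) (abelPoly_comp_X_add_C y n)
  simp only [eval_comp, eval_add, eval_X, eval_C, eval_finsetSum, eval_mul] at h
  rw [h]
  exact sum_congr rfl fun p _ => by ring

end abelPoly

theorem abelPoly_eval_natCast_div {K : Type*} [Field K] {n x : ℕ} (hx : x ≤ n)
    (hn : (n : K) ≠ 0) :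
    (abelPoly K x).eval (n : K) / n =
      if x = 0 then (n : K)⁻¹ else ((n - x : ℕ) : K) ^ (x - 1) := by
  cases x with
  | zero => simp
  | succ x =>
    rw [abelPoly_succ_eval, Nat.cast_sub hx]
    field_simp
    push_cast
    ring

theorem Finset.Nat.sum_antidiagonalTuple_succ {M : Type*} [AddCommMonoid M] (k n : ℕ)
    (f : (Fin (k + 1) → ℕ) → M) :
    ∑ x ∈ Nat.antidiagonalTuple (k + 1) n, f x =
      ∑ p ∈ antidiagonal n, ∑ y ∈ Nat.antidiagonalTuple k p.2, f (Fin.cons p.1 y) := by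
  change ((List.Nat.antidiagonalTuple (k + 1) n : Multiset (Fin (k + 1) → ℕ)).map f).sum =
    (((List.Nat.antidiagonal n : List (ℕ × ℕ)) : Multiset (ℕ × ℕ)).map fun p : ℕ × ℕ =>
      ((List.Nat.antidiagonalTuple k p.2 : Multiset (Fin k → ℕ)).map
        fun y => f (Fin.cons p.1 y)).sum).sum
  simp [List.Nat.antidiagonalTuple, List.flatMap_def, List.sum_flatten, Function.comp_def]

theorem Finset.Nat.filter_Iic_eq_antidiagonalTuple (k n : ℕ) :
    (Iic (fun _ : Fin k => n)).filter (fun x => ∑ i, x i = n) = Nat.antidiagonalTuple k n := by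
  ext x
  simp only [mem_filter, mem_Iic, Nat.mem_antidiagonalTuple, and_iff_right_iff_imp]
  rintro rfl i
  exact single_le_sum (fun j _ => Nat.zero_le (x j)) (mem_univ i)

theorem Nat.multinomial_univ_fin_cons {k : ℕ} (a : ℕ) (y : Fin k → ℕ) :
    Nat.multinomial univ (Fin.cons a y : Fin (k + 1) → ℕ) =
      (a + ∑ i, y i).choose a * Nat.multinomial univ y := by
  rw [Fin.univ_succ, Nat.multinomial_cons]
  simp [Nat.multinomial]

theorem sum_antidiagonalTuple_multinomial_mul_prod {R : Type*} [CommSemiring R]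
    {p : ℕ → R → R} (hp_zero : ∀ n, p n 0 = if n = 0 then 1 else 0)
    (hp_add : ∀ n x y, p n (x + y) = ∑ q ∈ antidiagonal n, n.choose q.1 * p q.1 x * p q.2 y)
    (k n : ℕ) (y : Fin k → R) :
    ∑ x ∈ Nat.antidiagonalTuple k n, (Nat.multinomial univ x : R) * ∏ i, p (x i) (y i) =
      p n (∑ i, y i) := by
  induction k generalizing n with
  | zero => cases n <;> simp [hp_zero]
  | succ k ih =>
    rw [Fin.sum_univ_succ, hp_add, Nat.sum_antidiagonalTuple_succ]
    refine sum_congr rfl fun q hq => ?_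
    rw [← ih q.2 (fun i => y i.succ), mul_sum]
    refine sum_congr rfl fun x hx => ?_
    rw [Nat.mem_antidiagonalTuple] at hx
    rw [HasAntidiagonal.mem_antidiagonal] at hq
    rw [Nat.multinomial_univ_fin_cons, Fin.prod_univ_succ, hx, hq]
    simp only [Fin.cons_zero, Fin.cons_succ]
    push_cast
    ring

theorem abramson_multinomial_identity_general (n k : ℕ) (hn : 1 ≤ n) :
    ∑ x ∈ (Finset.Iic (fun _ : Fin k => n)).filter (fun x => ∑ i, x i = n),
        (Nat.multinomial Finset.univ x : ℝ) *
          ∏ i, (if x i = 0 then ((n : ℝ))⁻¹ else ((n - x i : ℕ) : ℝ) ^ (x i - 1))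
      = (k : ℝ) * ((k : ℝ) - 1) ^ (n - 1) * (n : ℝ) ^ ((n : ℝ) - (k : ℝ)) := by
  have hn0 : (n : ℝ) ≠ 0 := by positivity
  have hmulti := sum_antidiagonalTuple_multinomial_mul_prod
    (p := fun m c => (abelPoly ℝ m).eval c) abelPoly_eval_zero abelPoly_eval_add k n (fun _ => n)
  simp only [sum_const, card_univ, Fintype.card_fin, nsmul_eq_mul] at hmulti
  calc _ = ∑ x ∈ Nat.antidiagonalTuple k n, (Nat.multinomial univ x : ℝ) *
          ∏ i, (abelPoly ℝ (x i)).eval (n : ℝ) / n := by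
        rw [← Nat.filter_Iic_eq_antidiagonalTuple]
        refine sum_congr rfl fun x hx => congrArg _ <| prod_congr rfl fun i _ => ?_
        exact (abelPoly_eval_natCast_div ((mem_Iic.1 (mem_filter.1 hx).1) i) hn0).symm
    _ = (n : ℝ)⁻¹ ^ k * (abelPoly ℝ n).eval ((k : ℝ) * n) := by
        rw [← hmulti, mul_sum]
        refine sum_congr rfl fun x _ => ?_
        rw [prod_div_distrib, prod_const, card_univ, Fintype.card_fin]
        ring
    _ = _ := by
        obtain ⟨m, rfl⟩ : ∃ m, n = m + 1 := ⟨n - 1, by omega⟩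
        rw [Real.rpow_sub_natCast hn0, Real.rpow_natCast]
        push_cast at hn0 ⊢
        rw [abelPoly_succ_eval, show (k : ℝ) * (m + 1) - (m + 1) = (k - 1) * (m + 1) by ring,
          mul_pow, inv_pow]
        field_simp
        ring

theorem abramson_multinomial_identity (n k : ℕ) (hn : 1 ≤ n) (hk : 2 ≤ k) :
    ∑ x ∈ (Finset.Iic (fun _ : Fin k => n)).filter (fun x => ∑ i, x i = n),
        (Nat.multinomial Finset.univ x : ℝ) *
          ∏ i, (if x i = 0 then ((n : ℝ))⁻¹ else ((n - x i : ℕ) : ℝ) ^ (x i - 1))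
      = (k : ℝ) * ((k : ℝ) - 1) ^ (n - 1) * (n : ℝ) ^ ((n : ℝ) - (k : ℝ)) :=
  abramson_multinomial_identity_general n k hn
end
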